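/- arXiv:2412.05807 — 3 statements merged into one kernel-verified Lean document; each statement's English description precedes it below -/
import Mathlib

section
/- Let p ∈ [1,2], ε ∈ (0,1), and t > 0 be real. Let f, g ∈ ℝ^n satisfy ‖f‖_p ≥ 50·t^{1/p} and ‖g − f‖_1 ≤ (ε/100)·t^{1/p}. Suppose S ⊆ {1,…,n} satisfies { i : |f_i| ≥ (ε/2)·‖f‖_p } ⊆ S ⊆ { i : |f_i| ≥ (ε/4)·‖f‖_p }. Then every index i with |g_i| ≥ ε·‖g‖_p belongs to S, and every index j ∈ S satisfies |g_j| ≥ (ε/5)·‖g‖_p. -/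
lemma lp_le_l1 {ι : Type*} (s : Finset ι) (h : ι → ℝ) {p : ℝ} (hp : 1 ≤ p) :
    (∑ i ∈ s, |h i| ^ p) ^ (1 / p) ≤ ∑ i ∈ s, |h i| := by
  have hp0 : (0:ℝ) < p := lt_of_lt_of_le one_pos hp
  set T := ∑ i ∈ s, |h i| with hT
  have hT0 : 0 ≤ T := Finset.sum_nonneg fun i _ => abs_nonneg _
  have key : ∑ i ∈ s, |h i| ^ p ≤ T ^ p := by
    calc ∑ i ∈ s, |h i| ^ p ≤ ∑ i ∈ s, |h i| * T ^ (p - 1) := by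
          refine Finset.sum_le_sum fun i hi => ?_
          have h1 : |h i| ^ p = |h i| ^ (1:ℝ) * |h i| ^ (p - 1) := by
            rw [← Real.rpow_add_of_nonneg (abs_nonneg _) zero_le_one (by linarith)]
            ring_nf
          rw [h1, Real.rpow_one]
          refine mul_le_mul_of_nonneg_left ?_ (abs_nonneg _)
          exact Real.rpow_le_rpow (abs_nonneg _)
            (Finset.single_le_sum (fun j _ => abs_nonneg (h j)) hi) (by linarith)
      _ = T * T ^ (p - 1) := by rw [← Finset.sum_mul]
      _ = T ^ p := by
          rw [show T * T ^ (p-1) = T ^ (1:ℝ) * T ^ (p-1) by rw [Real.rpow_one],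
            ← Real.rpow_add_of_nonneg hT0 zero_le_one (by linarith)]
          ring_nf
  calc (∑ i ∈ s, |h i| ^ p) ^ (1 / p) ≤ (T ^ p) ^ (1 / p) :=
        Real.rpow_le_rpow (Finset.sum_nonneg fun i _ =>
          Real.rpow_nonneg (abs_nonneg _) _) key (by positivity)
    _ = T := by
        rw [← Real.rpow_mul hT0, mul_one_div, div_self (ne_of_gt hp0), Real.rpow_one]


/-- Let `p ∈ [1,2]`, `ε ∈ (0,1)`, `t > 0`, and let `f, g ∈ ℝ^n` satisfy
`‖f‖_p ≥ 50·t^{1/p}` and `‖g − f‖_1 ≤ (ε/100)·t^{1/p}`. If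
`{i : |f i| ≥ (ε/2)·‖f‖_p} ⊆ S ⊆ {i : |f i| ≥ (ε/4)·‖f‖_p}`, then every index `i`
with `|g i| ≥ ε·‖g‖_p` belongs to `S`, and every `j ∈ S` has `|g j| ≥ (ε/5)·‖g‖_p`. -/
theorem stmt_3 (n : ℕ) (p ε t : ℝ) (hp1 : 1 ≤ p) (hp2 : p ≤ 2)
    (hε0 : 0 < ε) (hε1 : ε < 1) (ht : 0 < t)
    (f g : Fin n → ℝ)
    (hf : 50 * t ^ (1 / p) ≤ (∑ i, |f i| ^ p) ^ (1 / p))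
    (hgf : ∑ i, |g i - f i| ≤ ε / 100 * t ^ (1 / p))
    (S : Finset (Fin n))
    (hS1 : ∀ i, ε / 2 * (∑ i, |f i| ^ p) ^ (1 / p) ≤ |f i| → i ∈ S)
    (hS2 : ∀ j ∈ S, ε / 4 * (∑ i, |f i| ^ p) ^ (1 / p) ≤ |f j|) :
    (∀ i, ε * (∑ i, |g i| ^ p) ^ (1 / p) ≤ |g i| → i ∈ S) ∧
    (∀ j ∈ S, ε / 5 * (∑ i, |g i| ^ p) ^ (1 / p) ≤ |g j|) := by
  set F := (∑ i, |f i| ^ p) ^ (1 / p) with hFdef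
  set G := (∑ i, |g i| ^ p) ^ (1 / p) with hGdef
  set D := ∑ i, |g i - f i| with hDdef
  have hp0 : (0:ℝ) < p := by linarith
  have htp : (0:ℝ) < t ^ (1/p) := Real.rpow_pos_of_pos ht _
  have hF0 : 0 < F := lt_of_lt_of_le (by positivity) hf
  have htF : t ^ (1/p) ≤ F / 50 := by linarith
  have hD0 : 0 ≤ D := Finset.sum_nonneg fun i _ => abs_nonneg _
  have hDle : D ≤ ε * F / 5000 := by
    have h := mul_le_mul_of_nonneg_left htF (le_of_lt (show (0:ℝ) < ε/100 by positivity))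
    calc D ≤ ε/100 * t^(1/p) := hgf
      _ ≤ ε/100 * (F/50) := h
      _ = ε * F / 5000 := by ring
  have hcoord : ∀ i, |g i - f i| ≤ D := fun i =>
    Finset.single_le_sum (f := fun j => |g j - f j|) (fun j _ => abs_nonneg _) (Finset.mem_univ i)
  have heq1 : ∀ i : Fin n, f i + (g i - f i) = g i := fun i => by ring
  have heq2 : ∀ i : Fin n, g i + (f i - g i) = f i := fun i => by ring
  have hGF : G ≤ F + D := by
    have h := Real.Lp_add_le (Finset.univ) f (fun i => g i - f i) hp1
    simp only [heq1] at h
    have h2 : (∑ i, |g i - f i| ^ p) ^ (1/p) ≤ D := lp_le_l1 _ _ hp1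
    calc G ≤ F + (∑ i, |g i - f i| ^ p) ^ (1/p) := h
      _ ≤ F + D := by linarith
  have hFG : F ≤ G + D := by
    have h := Real.Lp_add_le (Finset.univ) g (fun i => f i - g i) hp1
    simp only [heq2] at h
    have h2 : (∑ i, |f i - g i| ^ p) ^ (1/p) ≤ ∑ i, |f i - g i| := lp_le_l1 _ _ hp1
    have h3 : ∑ i, |f i - g i| = D := by
      rw [hDdef]; exact Finset.sum_congr rfl fun i _ => abs_sub_comm _ _
    calc F ≤ G + (∑ i, |f i - g i| ^ p) ^ (1/p) := h
      _ ≤ G + D := by rw [← h3]; linarith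
  constructor
  · intro i hi
    apply hS1 i
    have h1 : |g i| - |g i - f i| ≤ |f i| := by
      have := abs_sub_abs_le_abs_sub (g i) (f i)
      linarith
    have h2 : ε * (F - D) ≤ ε * G := mul_le_mul_of_nonneg_left (by linarith) hε0.le
    have h3 : ε * D ≤ D := by nlinarith
    nlinarith [hcoord i]
  · intro j hj
    have hfj := hS2 j hj
    have h1 : |f j| - |g j - f j| ≤ |g j| := by
      have := abs_sub_abs_le_abs_sub (f j) (g j)
      have := abs_sub_comm (f j) (g j)
      linarith
    have h3 : ε * D ≤ D := by nlinarith
    nlinarith [hcoord j, mul_le_mul_of_nonneg_left hGF (show (0:ℝ) ≤ ε/5 by positivity)]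
end

section
/- Let p ∈ [1,2] be real, let N be a positive integer, and let ε > 0. Let f ∈ ℤ^n be an integer vector with at least N nonzero coordinates, and let v ∈ ℝ^n satisfy ‖v‖_1 ≤ ε·N^{1/p}. Then (1−ε)·‖f‖_p ≤ ‖f+v‖_p ≤ (1+ε)·‖f‖_p. -/
/-- ℓ_p norm is at most ℓ_1 norm for `p ≥ 1`. -/
lemma lp_le_l1_s4 {n : ℕ} {p : ℝ} (hp1 : 1 ≤ p) (v : Fin n → ℝ) :
    (∑ i, |v i| ^ p) ^ (1 / p) ≤ ∑ i, |v i| := by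
  have hp0 : 0 < p := lt_of_lt_of_le one_pos hp1
  set S : ℝ := ∑ i, |v i| with hS
  have hSnn : 0 ≤ S := Finset.sum_nonneg fun i _ => abs_nonneg _
  have key : ∑ i, |v i| ^ p ≤ S ^ p := by
    calc ∑ i, |v i| ^ p ≤ ∑ i, S ^ (p - 1) * |v i| := by
          apply Finset.sum_le_sum
          intro i _
          have h1 : |v i| ≤ S :=
            Finset.single_le_sum (f := fun i => |v i|) (fun j _ => abs_nonneg _)
              (Finset.mem_univ i)
          have h2 : |v i| ^ p = |v i| ^ (p - 1) * |v i| := by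
            rw [show p = (p - 1) + 1 by ring,
              Real.rpow_add' (abs_nonneg _) (by linarith : p - 1 + 1 ≠ 0), Real.rpow_one]
            ring_nf
          rw [h2]
          exact mul_le_mul_of_nonneg_right
            (Real.rpow_le_rpow (abs_nonneg _) h1 (by linarith)) (abs_nonneg _)
      _ = S ^ (p - 1) * S := by rw [← Finset.mul_sum]
      _ = S ^ p := by
          rw [show p = (p - 1) + 1 by ring,
            Real.rpow_add' hSnn (by linarith : p - 1 + 1 ≠ 0), Real.rpow_one]
          ring_nf
  calc (∑ i, |v i| ^ p) ^ (1 / p) ≤ (S ^ p) ^ (1 / p) :=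
        Real.rpow_le_rpow (Finset.sum_nonneg fun i _ =>
          Real.rpow_nonneg (abs_nonneg _) _) key (by positivity)
    _ = S := by
        rw [← Real.rpow_mul hSnn, mul_one_div_cancel (ne_of_gt hp0), Real.rpow_one]

/-- Let `p ∈ [1,2]`, `N` a positive integer, `ε > 0`. If `f ∈ ℤ^n` has at
least `N` nonzero coordinates and `v ∈ ℝ^n` has `‖v‖_1 ≤ ε·N^{1/p}`, then
`(1−ε)·‖f‖_p ≤ ‖f+v‖_p ≤ (1+ε)·‖f‖_p`. -/
theorem stmt_4 (n : ℕ) (p ε : ℝ) (N : ℕ) (hp1 : 1 ≤ p) (hp2 : p ≤ 2)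
    (hN : 0 < N) (hε : 0 < ε)
    (f : Fin n → ℤ) (v : Fin n → ℝ)
    (hf : N ≤ (Finset.univ.filter fun i => f i ≠ 0).card)
    (hv : ∑ i, |v i| ≤ ε * (N : ℝ) ^ (1 / p)) :
    (1 - ε) * (∑ i, |(f i : ℝ)| ^ p) ^ (1 / p)
        ≤ (∑ i, |(f i : ℝ) + v i| ^ p) ^ (1 / p) ∧
    (∑ i, |(f i : ℝ) + v i| ^ p) ^ (1 / p)
        ≤ (1 + ε) * (∑ i, |(f i : ℝ)| ^ p) ^ (1 / p) := by
  have hp0 : 0 < p := lt_of_lt_of_le one_pos hp1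
  set A := (∑ i, |(f i : ℝ)| ^ p) ^ (1 / p) with hA
  set B := (∑ i, |(f i : ℝ) + v i| ^ p) ^ (1 / p) with hB
  have hAnn : 0 ≤ A := Real.rpow_nonneg
    (Finset.sum_nonneg fun i _ => Real.rpow_nonneg (abs_nonneg _) _) _
  have hBnn : 0 ≤ B := Real.rpow_nonneg
    (Finset.sum_nonneg fun i _ => Real.rpow_nonneg (abs_nonneg _) _) _
  -- lower bound: N ≤ ∑ |f i|^p
  have hNle : (N : ℝ) ≤ ∑ i, |(f i : ℝ)| ^ p := by
    have h1 : (N : ℝ) ≤ ((Finset.univ.filter fun i => f i ≠ 0).card : ℝ) := by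
      exact_mod_cast hf
    refine h1.trans ?_
    calc ((Finset.univ.filter fun i => f i ≠ 0).card : ℝ)
        = ∑ i ∈ Finset.univ.filter (fun i => f i ≠ 0), (1 : ℝ) := by
          simp
      _ ≤ ∑ i ∈ Finset.univ.filter (fun i => f i ≠ 0), |(f i : ℝ)| ^ p := by
          apply Finset.sum_le_sum
          intro i hi
          have hi' : f i ≠ 0 := (Finset.mem_filter.mp hi).2
          have : (1 : ℝ) ≤ |(f i : ℝ)| := by
            have : (1 : ℤ) ≤ |f i| := Int.one_le_abs hi'
            exact_mod_cast (by push_cast; exact_mod_cast this : (1:ℝ) ≤ |(f i : ℝ)|)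
          exact Real.one_le_rpow this (le_of_lt hp0)
      _ ≤ ∑ i, |(f i : ℝ)| ^ p :=
          Finset.sum_le_sum_of_subset_of_nonneg (Finset.filter_subset _ _)
            (fun i _ _ => Real.rpow_nonneg (abs_nonneg _) _)
  have hNA : (N : ℝ) ^ (1 / p) ≤ A := by
    exact Real.rpow_le_rpow (Nat.cast_nonneg N) hNle (by positivity)
  -- ‖v‖_p ≤ ε A
  have hvp : (∑ i, |v i| ^ p) ^ (1 / p) ≤ ε * A := by
    refine (lp_le_l1_s4 hp1 v).trans (hv.trans ?_)
    exact mul_le_mul_of_nonneg_left hNA (le_of_lt hε)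
  -- Minkowski both ways
  have mink1 : B ≤ A + (∑ i, |v i| ^ p) ^ (1 / p) :=
    Real.Lp_add_le Finset.univ (fun i => (f i : ℝ)) v hp1
  have mink2 : A ≤ B + (∑ i, |v i| ^ p) ^ (1 / p) := by
    have := Real.Lp_add_le Finset.univ (fun i => (f i : ℝ) + v i) (fun i => -v i) hp1
    simpa only [add_neg_cancel_right, abs_neg] using this
  constructor
  · nlinarith [mink2, hvp]
  · nlinarith [mink1, hvp]
end

section
/- Let p > 0 be real, ε ∈ (0,1], and let k ≥ 1 be an integer. Let f ∈ ℝ^n, and let S ⊆ T ⊆ {1,…,n} with |T| = k and |S| ≥ (1 − ε/4)·k, where S consists of largest-magnitude coordinates of f in the sense that |f_i| ≥ |f_j| for every i ∈ S and every j ∉ S. Let g be obtained from f by zeroing the coordinates in T and h be obtained from f by zeroing the coordinates in S. Then 0 ≤ ‖h‖_p^p − ‖g‖_p^p ≤ (ε/3)·‖f‖_p^p. -/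
/-! Only the coordinates in `T \ S` contribute to `‖h‖_p^p − ‖g‖_p^p`. There are at most
`εk/4 ≤ (ε/3)·|S|` of them (as `|S| ≥ 3k/4`), and each is dominated by every coordinate of `S`;
averaging over `S` bounds their total by `(ε/3)·∑_{i∈S} |f_i|^p`. -/

open Finset

theorem abs_ite_zero_rpow {p : ℝ} (hp : p ≠ 0) (P : Prop) [Decidable P] (x : ℝ) :
    |if P then 0 else x| ^ p = if P then 0 else |x| ^ p := by
  split_ifs <;> simp [hp]

theorem sum_ite_notMem_sub_sum_ite_notMem {ι M : Type*} [Fintype ι] [DecidableEq ι]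
    [AddCommGroup M] {S T : Finset ι} (hST : S ⊆ T) (F : ι → M) :
    (∑ i, if i ∈ S then 0 else F i) - ∑ i, (if i ∈ T then 0 else F i) = ∑ i ∈ T \ S, F i := by
  have hcompl (U : Finset ι) : (∑ i, if i ∈ U then 0 else F i) = ∑ i ∈ Uᶜ, F i := by
    rw [sum_ite, sum_const_zero, zero_add, filter_notMem_eq_sdiff, compl_eq_univ_sdiff]
  rw [hcompl, hcompl, ← sum_sdiff (compl_subset_compl.2 hST), compl_sdiff_compl,
    add_sub_cancel_right]

theorem card_nsmul_sum_le_card_nsmul_sum {ι M : Type*} [AddCommMonoid M] [PartialOrder M]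
    [IsOrderedAddMonoid M] {A S : Finset ι} {a : ι → M} (h : ∀ i ∈ A, ∀ j ∈ S, a i ≤ a j) :
    #S • ∑ i ∈ A, a i ≤ #A • ∑ j ∈ S, a j := by
  calc #S • ∑ i ∈ A, a i = ∑ i ∈ A, ∑ _j ∈ S, a i := by simp [sum_const, sum_nsmul]
    _ ≤ ∑ i ∈ A, ∑ j ∈ S, a j := sum_le_sum fun i hi => sum_le_sum fun j hj => h i hi j hj
    _ = #A • ∑ j ∈ S, a j := sum_const _

theorem sum_le_mul_sum_of_card_le_mul_card {ι : Type*} {A S : Finset ι} {a : ι → ℝ} {c : ℝ}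
    (ha : ∀ i, 0 ≤ a i) (hcard : (#A : ℝ) ≤ c * #S) (h : ∀ i ∈ A, ∀ j ∈ S, a i ≤ a j) :
    ∑ i ∈ A, a i ≤ c * ∑ j ∈ S, a j := by
  rcases (#S).eq_zero_or_pos with hS | hS
  · have hA : (#A : ℝ) ≤ 0 := by simpa [hS] using hcard
    obtain rfl : A = ∅ := card_eq_zero.1 (Nat.le_zero.1 (by exact_mod_cast hA))
    simp [card_eq_zero.1 hS]
  · refine le_of_mul_le_mul_left ?_ (by exact_mod_cast hS : (0 : ℝ) < #S)
    calc (#S : ℝ) * ∑ i ∈ A, a i ≤ #A * ∑ j ∈ S, a j := by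
          simpa only [nsmul_eq_mul] using card_nsmul_sum_le_card_nsmul_sum h
      _ ≤ c * #S * ∑ j ∈ S, a j := by gcongr; exact sum_nonneg fun j _ => ha j
      _ = #S * (c * ∑ j ∈ S, a j) := by ring

theorem card_sdiff_le_div_three_mul_card {ι : Type*} [DecidableEq ι] {S T : Finset ι} {ε : ℝ}
    (hST : S ⊆ T) (hε0 : 0 ≤ ε) (hε1 : ε ≤ 1) (hS : (1 - ε / 4) * (#T : ℝ) ≤ #S) :
    (#(T \ S) : ℝ) ≤ ε / 3 * #S := by
  rw [card_sdiff_of_subset hST, Nat.cast_sub (card_le_card hST)]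
  have hT : 0 ≤ (#T : ℝ) := Nat.cast_nonneg _
  have hS_large : 3 / 4 * (#T : ℝ) ≤ #S := by nlinarith
  nlinarith [mul_le_mul_of_nonneg_left hS_large hε0]

theorem stmt_6_general (n : ℕ) (p ε : ℝ) (k : ℕ) (hp : 0 < p) (hε0 : 0 < ε) (hε1 : ε ≤ 1)
    (f : Fin n → ℝ) (S T : Finset (Fin n)) (hST : S ⊆ T)
    (hT : T.card = k) (hS : (1 - ε / 4) * (k : ℝ) ≤ (S.card : ℝ))
    (htop : ∀ i ∈ S, ∀ j ∉ S, |f j| ≤ |f i|)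
    (g h : Fin n → ℝ)
    (hg : ∀ i, g i = if i ∈ T then 0 else f i)
    (hh : ∀ i, h i = if i ∈ S then 0 else f i) :
    0 ≤ (∑ i, |h i| ^ p) - ∑ i, |g i| ^ p ∧
    (∑ i, |h i| ^ p) - ∑ i, |g i| ^ p ≤ ε / 3 * ∑ i, |f i| ^ p := by
  simp only [hg, hh, abs_ite_zero_rpow hp.ne']
  rw [sum_ite_notMem_sub_sum_ite_notMem hST]
  subst hT
  have hnonneg : ∀ i, 0 ≤ |f i| ^ p := fun i => by positivity
  refine ⟨sum_nonneg fun i _ => hnonneg i, ?_⟩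
  calc ∑ i ∈ T \ S, |f i| ^ p ≤ ε / 3 * ∑ i ∈ S, |f i| ^ p :=
        sum_le_mul_sum_of_card_le_mul_card hnonneg
          (card_sdiff_le_div_three_mul_card hST hε0.le hε1 hS) fun i hi j hj =>
          Real.rpow_le_rpow (abs_nonneg _) (htop j hj i (mem_sdiff.1 hi).2) hp.le
    _ ≤ ε / 3 * ∑ i, |f i| ^ p := by
        gcongr
        exact subset_univ S

/-- Let `S ⊆ T ⊆ {1,…,n}` with `|T| = k`, `|S| ≥ (1 − ε/4)·k`, where the
coordinates of `f` indexed by `S` dominate in magnitude all coordinates outside `S`.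
Let `g` zero out the coordinates in `T` and `h` zero out the coordinates in `S`. Then
`0 ≤ ‖h‖_p^p − ‖g‖_p^p ≤ (ε/3)·‖f‖_p^p`. -/
theorem stmt_6 (n : ℕ) (p ε : ℝ) (k : ℕ) (hp : 0 < p) (hε0 : 0 < ε) (hε1 : ε ≤ 1)
    (hk : 1 ≤ k)
    (f : Fin n → ℝ) (S T : Finset (Fin n)) (hST : S ⊆ T)
    (hT : T.card = k) (hS : (1 - ε / 4) * (k : ℝ) ≤ (S.card : ℝ))
    (htop : ∀ i ∈ S, ∀ j ∉ S, |f j| ≤ |f i|)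
    (g h : Fin n → ℝ)
    (hg : ∀ i, g i = if i ∈ T then 0 else f i)
    (hh : ∀ i, h i = if i ∈ S then 0 else f i) :
    0 ≤ (∑ i, |h i| ^ p) - ∑ i, |g i| ^ p ∧
    (∑ i, |h i| ^ p) - ∑ i, |g i| ^ p ≤ ε / 3 * ∑ i, |f i| ^ p :=
  stmt_6_general n p ε k hp hε0 hε1 f S T hST hT hS htop g h hg hh
end
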